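/- Let C ⊂ 𝕋 be a smooth closed curve with nowhere vanishing curvature that is invariant under rotation by 2π/k for some integer k ≥ 3. Then C is static; in fact, for every unit direction θ ∈ S¹ one has ∫₀^L ⟨θ, γ̇(t)⟩² dt = L/2, and consequently 4·B_C(μ) − L² = 0 for every probability measure μ on S¹. -/

import Mathlib

open MeasureTheory ProbabilityTheory Real Filter Topology
open scoped ENNReal

noncomputable section

/-- The set `S` of natural numbers expressible as a sum of two squares. -/
def sumTwoSquares : Set ℕ := {m : ℕ | ∃ a b : ℤ, (m : ℤ) = a ^ 2 + b ^ 2}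

/-- `Λ n` : the set of lattice points lying on the circle of radius `√n`. -/
def latticePoints (n : ℕ) : Finset (ℤ × ℤ) :=
  (Finset.Icc (-(n : ℤ), -(n : ℤ)) ((n : ℤ), (n : ℤ))).filter
    fun l => l.1 ^ 2 + l.2 ^ 2 = (n : ℤ)

/-- `N n = |Λ n|`, the number of lattice points on the circle of radius `√n`. -/
def latCard (n : ℕ) : ℕ := (latticePoints n).card

/-- The Euclidean norm of an integer vector. -/
def inorm (l : ℤ × ℤ) : ℝ := Real.sqrt ((l.1 : ℝ) ^ 2 + (l.2 : ℝ) ^ 2)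

/-- The Euclidean inner product on `ℝ²`. -/
def dot (v w : ℝ × ℝ) : ℝ := v.1 * w.1 + v.2 * w.2

/-- The unit vector `λ/|λ|`. -/
def dir (l : ℤ × ℤ) : ℝ × ℝ := ((l.1 : ℝ) / inorm l, (l.2 : ℝ) / inorm l)

/-- A sequence of energies `n : ℕ → ℕ` is `δ`-separated if
`min_{λ ≠ λ' ∈ Λ_n} ‖λ - λ'‖ ≫ n^(1/4+δ)`. -/
def IsDeltaSep (δ : ℝ) (n : ℕ → ℕ) : Prop :=
  ∃ c > 0, ∀ k, ∀ l ∈ latticePoints (n k), ∀ l' ∈ latticePoints (n k), l ≠ l' →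
    c * (n k : ℝ) ^ ((1 : ℝ) / 4 + δ) ≤ inorm (l - l')

/-- `B_C(μ_n)`, expressed through the lattice points. -/
def Bseq (γ : ℝ → ℝ × ℝ) (L : ℝ) (n : ℕ) : ℝ :=
  ∫ t1 in Set.Icc (0 : ℝ) L, ∫ t2 in Set.Icc (0 : ℝ) L,
    (latCard n : ℝ)⁻¹ * ∑ l ∈ latticePoints n,
      dot (dir l) (deriv γ t1) ^ 2 * dot (dir l) (deriv γ t2) ^ 2

/-- `A_C(μ_n)`, expressed through the lattice points. -/
def Aseq (γ : ℝ → ℝ × ℝ) (L : ℝ) (n : ℕ) : ℝ :=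
  ((latCard n : ℝ)⁻¹) ^ 2 * ∑ l ∈ latticePoints n, ∑ l' ∈ latticePoints n,
    (∫ t in Set.Icc (0 : ℝ) L,
      dot (dir l) (deriv γ t) ^ 2 * dot (dir l') (deriv γ t) ^ 2) ^ 2

/-- `F_C(μ_n)`, expressed through the lattice points. -/
def Fseq (γ : ℝ → ℝ × ℝ) (L : ℝ) (n : ℕ) : ℝ :=
  ∫ t1 in Set.Icc (0 : ℝ) L, ∫ t2 in Set.Icc (0 : ℝ) L,
    ((latCard n : ℝ) ^ 2)⁻¹ * ∑ l ∈ latticePoints n, ∑ l' ∈ latticePoints n,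
      dot (dir l) (deriv γ t1) * dot (dir l) (deriv γ t2) *
        (dot (dir l') (deriv γ t1) * dot (dir l') (deriv γ t2))

/-- `B_C(μ)` for a probability measure `μ` on (the unit circle in) `ℝ²`. -/
def Bmeas (γ : ℝ → ℝ × ℝ) (L : ℝ) (μ : Measure (ℝ × ℝ)) : ℝ :=
  ∫ t1 in Set.Icc (0 : ℝ) L, ∫ t2 in Set.Icc (0 : ℝ) L,
    ∫ θ, dot θ (deriv γ t1) ^ 2 * dot θ (deriv γ t2) ^ 2 ∂μ

/-- `A_C(μ)` for a probability measure `μ` on (the unit circle in) `ℝ²`. -/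
def Ameas (γ : ℝ → ℝ × ℝ) (L : ℝ) (μ : Measure (ℝ × ℝ)) : ℝ :=
  ∫ θ, ∫ θ', (∫ t in Set.Icc (0 : ℝ) L,
    dot θ (deriv γ t) ^ 2 * dot θ' (deriv γ t) ^ 2) ^ 2 ∂μ ∂μ

/-- A measure on `ℝ²` which is a probability measure supported on the unit circle `S¹`. -/
def IsCircleProb (μ : Measure (ℝ × ℝ)) : Prop :=
  IsProbabilityMeasure μ ∧ (∀ᵐ θ ∂μ, θ.1 ^ 2 + θ.2 ^ 2 = 1)

/-- A curve is static if `4 B_C(μ) - L² = 0` for every probability measure `μ` on `S¹`. -/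
def IsStatic (γ : ℝ → ℝ × ℝ) (L : ℝ) : Prop :=
  ∀ μ : Measure (ℝ × ℝ), IsCircleProb μ → 4 * Bmeas γ L μ - L ^ 2 = 0

/-- The coefficients `a_λ` are i.i.d. standard complex Gaussians, save for the
relations `a_{-λ} = conj (a_λ)` (independence holds for the family indexed by a
half-plane of indices). -/
def stdModel {Ω : Type*} [MeasurableSpace Ω] (P : Measure Ω) (a : ℤ × ℤ → Ω → ℂ) : Prop :=
  (∀ l, Measurable (a l)) ∧
  (∀ l ω, a (-l) ω = (starRingEnd ℂ) (a l ω)) ∧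
  (∀ l : ℤ × ℤ, l ≠ 0 →
    Measure.map (fun ω => (a l ω).re) P = gaussianReal 0 (1 / 2) ∧
    Measure.map (fun ω => (a l ω).im) P = gaussianReal 0 (1 / 2) ∧
    IndepFun (fun ω => (a l ω).re) (fun ω => (a l ω).im) P) ∧
  iIndepFun
    (fun l : {l : ℤ × ℤ // 0 < l.2 ∨ (l.2 = 0 ∧ 0 < l.1)} => a l.1) P

/-- The arithmetic random wave `T_n` (as a `ℤ²`-periodic function on `ℝ²`). -/
def wave {Ω : Type*} (a : ℤ × ℤ → Ω → ℂ) (n : ℕ) (ω : Ω) (x : ℝ × ℝ) : ℝ :=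
  (Real.sqrt (latCard n))⁻¹ *
    (∑ l ∈ latticePoints n, a l ω *
      Complex.exp (2 * (π : ℂ) * Complex.I *
        (((l.1 : ℝ) * x.1 + (l.2 : ℝ) * x.2 : ℝ) : ℂ))).re

/-- The restricted process `f_n = T_n ∘ γ`. -/
def proc {Ω : Type*} (a : ℤ × ℤ → Ω → ℂ) (γ : ℝ → ℝ × ℝ) (n : ℕ) (ω : Ω) (t : ℝ) : ℝ :=
  wave a n ω (γ t)

/-- The nodal intersections number `Z_n`: the number of zeros of `f_n` on `[0, L]`. -/
def nodZ {Ω : Type*} (a : ℤ × ℤ → Ω → ℂ) (γ : ℝ → ℝ × ℝ) (L : ℝ) (n : ℕ) (ω : Ω) : ℝ :=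
  ({t : ℝ | t ∈ Set.Icc 0 L ∧ proc a γ n ω t = 0}).ncard

/-- `E[Z_n]`. -/
def meanZ {Ω : Type*} [MeasurableSpace Ω] (P : Measure Ω) (a : ℤ × ℤ → Ω → ℂ)
    (γ : ℝ → ℝ × ℝ) (L : ℝ) (n : ℕ) : ℝ :=
  ∫ ω, nodZ a γ L n ω ∂P

/-- Second Hermite polynomial. -/
def H2 (x : ℝ) : ℝ := x ^ 2 - 1

/-- Fourth Hermite polynomial. -/
def H4 (x : ℝ) : ℝ := x ^ 4 - 6 * x ^ 2 + 3

/-- The normalized derivative `f̃_n' = f_n' / √(2π²n)`. -/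
def procTil {Ω : Type*} (a : ℤ × ℤ → Ω → ℂ) (γ : ℝ → ℝ × ℝ) (n : ℕ) (ω : Ω) (t : ℝ) : ℝ :=
  deriv (proc a γ n ω) t / Real.sqrt (2 * π ^ 2 * n)

/-- The second chaotic projection `Z_n[2]`. -/
def chaos2 {Ω : Type*} (a : ℤ × ℤ → Ω → ℂ) (γ : ℝ → ℝ × ℝ) (L : ℝ) (n : ℕ) (ω : Ω) : ℝ :=
  (Real.sqrt (2 * π ^ 2 * n) / (2 * π)) *
    (-(∫ t in Set.Icc (0 : ℝ) L, H2 (proc a γ n ω t)) +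
      ∫ t in Set.Icc (0 : ℝ) L, H2 (procTil a γ n ω t))

/-- The fourth chaotic projection `Z_n[4]`. -/
def chaos4 {Ω : Type*} (a : ℤ × ℤ → Ω → ℂ) (γ : ℝ → ℝ × ℝ) (L : ℝ) (n : ℕ) (ω : Ω) : ℝ :=
  (Real.sqrt (2 * π ^ 2 * n) / π) *
    ((3 / 24) * ∫ t in Set.Icc (0 : ℝ) L, H4 (proc a γ n ω t)
      - (1 / 4) * ∫ t in Set.Icc (0 : ℝ) L, H2 (proc a γ n ω t) * H2 (procTil a γ n ω t)
      - (1 / 24) * ∫ t in Set.Icc (0 : ℝ) L, H4 (procTil a γ n ω t))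

/-- Convergence in distribution of real random variables, tested against bounded
continuous functions. -/
def TendstoInDistrib {Ω : Type*} [MeasurableSpace Ω] (P : Measure Ω)
    (X : ℕ → Ω → ℝ) (ν : Measure ℝ) : Prop :=
  ∀ g : BoundedContinuousFunction ℝ ℝ,
    Tendsto (fun k => ∫ ω, g (X k ω) ∂P) atTop (𝓝 (∫ x, g x ∂ν))

/-- The covariance function `r_n(t₁,t₂)` of the restricted process. -/
def covr (γ : ℝ → ℝ × ℝ) (n : ℕ) (t1 t2 : ℝ) : ℝ :=
  (latCard n : ℝ)⁻¹ * ∑ l ∈ latticePoints n,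
    Real.cos (2 * π * ((l.1 : ℝ) * ((γ t1).1 - (γ t2).1) + (l.2 : ℝ) * ((γ t1).2 - (γ t2).2)))

/-- `r₁ = ∂r/∂t₁`. -/
def covr1 (γ : ℝ → ℝ × ℝ) (n : ℕ) (t1 t2 : ℝ) : ℝ :=
  deriv (fun s => covr γ n s t2) t1

/-- `r₂ = ∂r/∂t₂`. -/
def covr2 (γ : ℝ → ℝ × ℝ) (n : ℕ) (t1 t2 : ℝ) : ℝ :=
  deriv (fun s => covr γ n t1 s) t2

/-- `r₁₂ = ∂²r/∂t₁∂t₂`. -/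
def covr12 (γ : ℝ → ℝ × ℝ) (n : ℕ) (t1 t2 : ℝ) : ℝ :=
  deriv (fun s => covr1 γ n t1 s) t2

/-- `f(t) = γ̇₁(t)² − L⁻¹∫₀^L γ̇₁(u)² du`. -/
def fGam (γ : ℝ → ℝ × ℝ) (L t : ℝ) : ℝ :=
  (deriv γ t).1 ^ 2 - L⁻¹ * ∫ u in Set.Icc (0 : ℝ) L, (deriv γ u).1 ^ 2

/-- `g(t) = γ̇₁(t)γ̇₂(t) − L⁻¹∫₀^L γ̇₁(u)γ̇₂(u) du`. -/
def gGam (γ : ℝ → ℝ × ℝ) (L t : ℝ) : ℝ :=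
  (deriv γ t).1 * (deriv γ t).2 -
    L⁻¹ * ∫ u in Set.Icc (0 : ℝ) L, (deriv γ u).1 * (deriv γ u).2

/-- `a₁(μ)`, where `m4 = μ̂(4)`. -/
def a1c (γ : ℝ → ℝ × ℝ) (L m4 : ℝ) : ℝ :=
  2 * (1 + m4) * ∫ t in Set.Icc (0 : ℝ) L, fGam γ L t ^ 2

/-- `a₂(μ)`, where `m4 = μ̂(4)`. -/
def a2c (γ : ℝ → ℝ × ℝ) (L m4 : ℝ) : ℝ :=
  2 * (1 - m4) * ∫ t in Set.Icc (0 : ℝ) L, fGam γ L t ^ 2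

/-- `a₃(μ)`, where `m4 = μ̂(4)`. -/
def a3c (γ : ℝ → ℝ × ℝ) (L m4 : ℝ) : ℝ :=
  4 * Real.sqrt (1 - m4 ^ 2) * ∫ t in Set.Icc (0 : ℝ) L, fGam γ L t * gGam γ L t

/-- The law of the random variable
`M(μ) = (16 A_C(μ) − L²)^{-1/2} (a₁(μ)(Z₁²−1) + a₂(μ)(Z₂²−1) + a₃(μ) Z₁Z₂)`
with `Z₁, Z₂` i.i.d. standard Gaussians; here `Aval = A_C(μ)` and `m4 = μ̂(4)`. -/
def lawM (γ : ℝ → ℝ × ℝ) (L Aval m4 : ℝ) : Measure ℝ :=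
  Measure.map (fun z : ℝ × ℝ =>
      (Real.sqrt (16 * Aval - L ^ 2))⁻¹ *
        (a1c γ L m4 * (z.1 ^ 2 - 1) + a2c γ L m4 * (z.2 ^ 2 - 1) + a3c γ L m4 * z.1 * z.2))
    ((gaussianReal 0 1).prod (gaussianReal 0 1))

/-- The fourth Fourier coefficient `μ̂_n(4) = ∫ z^{-4} dμ_n` of the angular measure `μ_n`. -/
def hat4seq (n : ℕ) : ℝ :=
  ((latCard n : ℂ)⁻¹ * ∑ l ∈ latticePoints n,
    ((((l.1 : ℝ) : ℂ) + ((l.2 : ℝ) : ℂ) * Complex.I) / (Real.sqrt n : ℂ)) ^ (-4 : ℤ)).re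

/-- The angular probability measure `μ_n` on the unit circle `S¹ ⊂ ℝ²`. -/
def muMeas (n : ℕ) : Measure (ℝ × ℝ) :=
  (latCard n : ℝ≥0∞)⁻¹ • ∑ l ∈ latticePoints n,
    Measure.dirac (((l.1 : ℝ) / Real.sqrt n, (l.2 : ℝ) / Real.sqrt n) : ℝ × ℝ)

/-- The fourth Fourier coefficient `μ̂(4) = ∫ z^{-4} dμ` of a measure `μ` on `S¹`. -/
def hat4meas (μ : Measure (ℝ × ℝ)) : ℝ :=
  (∫ θ, ((θ.1 : ℂ) + (θ.2 : ℂ) * Complex.I) ^ (-4 : ℤ) ∂μ).re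

/-- The integrand appearing in the approximate Kac–Rice formula. -/
def krIntegrand (r r1 r2 r12 α : ℝ) : ℝ :=
  3 / 4 * r ^ 4 + 1 / 12 * (r12 / α) ^ 4
    - 1 / 4 * (r2 / Real.sqrt α) ^ 4 - 1 / 4 * (r1 / Real.sqrt α) ^ 4
    + 2 * (r12 / α) * r * (r1 / Real.sqrt α) * (r2 / Real.sqrt α)
    + 1 / 2 * (r1 / Real.sqrt α) ^ 2 * (r2 / Real.sqrt α) ^ 2
    - 3 / 2 * r ^ 2 * (r2 / Real.sqrt α) ^ 2 - 3 / 2 * r ^ 2 * (r1 / Real.sqrt α) ^ 2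
    + 1 / 2 * (r12 / α) ^ 2 * r ^ 2
    + 1 / 2 * (r2 / Real.sqrt α) ^ 2 * (r12 / α) ^ 2
    + 1 / 2 * (r1 / Real.sqrt α) ^ 2 * (r12 / α) ^ 2

/-- Rotation of the plane by angle `θ`. -/
def rot (θ : ℝ) (v : ℝ × ℝ) : ℝ × ℝ :=
  (Real.cos θ * v.1 - Real.sin θ * v.2, Real.sin θ * v.1 + Real.cos θ * v.2)


set_option maxHeartbeats 1000000 in
/-- **Statement 18x** -/
theorem rotation_invariant_curve_is_static
    (γ : ℝ → ℝ × ℝ) (L : ℝ) (hL : 0 < L)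
    (hsmooth : ContDiff ℝ (⊤ : ℕ∞) γ)
    (hunit : ∀ t, (deriv γ t).1 ^ 2 + (deriv γ t).2 ^ 2 = 1)
    (hcurv : ∀ t, deriv (deriv γ) t ≠ 0)
    (hclosed : ∀ t, γ (t + L) = γ t)
    (k : ℕ) (hk : 3 ≤ k)
    (hinv : ∃ c : ℝ × ℝ, ∀ t, γ (t + L / k) - c = rot (2 * π / k) (γ t - c)) :
    (∀ θ : ℝ × ℝ, θ.1 ^ 2 + θ.2 ^ 2 = 1 →
      (∫ t in Set.Icc (0 : ℝ) L, dot θ (deriv γ t) ^ 2) = L / 2) ∧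
    IsStatic γ L := by
  obtain ⟨c, hc⟩ := hinv
  have hdiff : Differentiable ℝ γ := hsmooth.differentiable (by simp)
  have hdc : Continuous (deriv γ) := hsmooth.continuous_deriv (by exact_mod_cast le_top)
  set α : ℝ := 2 * π / k with hα
  -- periodicity of the derivative
  have hdper : ∀ t, deriv γ (t + L) = deriv γ t := by
    intro t
    have hfun : (fun s => γ (s + L)) = γ := funext hclosed
    calc deriv γ (t + L) = deriv (fun s => γ (s + L)) t := (deriv_comp_add_const γ L t).symm
    _ = deriv γ t := by rw [hfun]
  -- the derivative rotates
  have hrot : ∀ t, deriv γ (t + L / k) = rot α (deriv γ t) := by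
    intro t
    have hγt : HasDerivAt γ (deriv γ t) t := (hdiff t).hasDerivAt
    have h1 : HasDerivAt (fun s => (γ s).1) ((deriv γ t).1) t :=
      by have := (hasFDerivAt_fst (𝕜 := ℝ) (p := γ t)).comp_hasDerivAt t hγt; exact this
    have h2 : HasDerivAt (fun s => (γ s).2) ((deriv γ t).2) t :=
      by have := (hasFDerivAt_snd (𝕜 := ℝ) (p := γ t)).comp_hasDerivAt t hγt; exact this
    have hG1 : HasDerivAt
        (fun s => c.1 + (Real.cos α * ((γ s).1 - c.1) - Real.sin α * ((γ s).2 - c.2)))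
        (Real.cos α * (deriv γ t).1 - Real.sin α * (deriv γ t).2) t :=
      (((h1.sub_const c.1).const_mul (Real.cos α)).sub
        ((h2.sub_const c.2).const_mul (Real.sin α))).const_add c.1
    have hG2 : HasDerivAt
        (fun s => c.2 + (Real.sin α * ((γ s).1 - c.1) + Real.cos α * ((γ s).2 - c.2)))
        (Real.sin α * (deriv γ t).1 + Real.cos α * (deriv γ t).2) t :=
      (((h1.sub_const c.1).const_mul (Real.sin α)).add
        ((h2.sub_const c.2).const_mul (Real.cos α))).const_add c.2
    have heq : (fun s => γ (s + L / k)) =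
        (fun s => ((c.1 + (Real.cos α * ((γ s).1 - c.1) - Real.sin α * ((γ s).2 - c.2)),
          c.2 + (Real.sin α * ((γ s).1 - c.1) + Real.cos α * ((γ s).2 - c.2))) : ℝ × ℝ)) := by
      funext s
      have h := hc s
      have h2' : γ (s + L / k) = rot α (γ s - c) + c := eq_add_of_sub_eq h
      rw [h2']
      simp only [rot, Prod.ext_iff, Prod.fst_add, Prod.snd_add, Prod.fst_sub, Prod.snd_sub]
      constructor <;> ring
    have hF : HasDerivAt (fun s => γ (s + L / k)) (rot α (deriv γ t)) t := by
      rw [heq]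
      exact hG1.prodMk hG2
    calc deriv γ (t + L / k) = deriv (fun s => γ (s + L / k)) t :=
      (deriv_comp_add_const γ (L / k) t).symm
    _ = rot α (deriv γ t) := hF.deriv
  -- trigonometric quantities
  have hk3 : (3 : ℝ) ≤ (k : ℝ) := by exact_mod_cast hk
  have hπ : 0 < π := Real.pi_pos
  have hα0 : 0 < α := by rw [hα]; positivity
  have hαπ : α < π := by
    rw [hα, div_lt_iff₀ (by linarith : (0:ℝ) < (k:ℝ))]
    nlinarith
  have hsin : 0 < Real.sin α := Real.sin_pos_of_pos_of_lt_pi hα0 hαπ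
  set C : ℝ := Real.cos α ^ 2 - Real.sin α ^ 2 with hCdef
  set S : ℝ := 2 * Real.sin α * Real.cos α with hSdef
  have hsc : Real.sin α ^ 2 + Real.cos α ^ 2 = 1 := Real.sin_sq_add_cos_sq α
  have hCS : C ^ 2 + S ^ 2 = 1 := by rw [hCdef, hSdef]; nlinarith
  have hClt : C < 1 := by rw [hCdef]; nlinarith
  -- shift invariance of integrals of L-periodic functions
  have hshift : ∀ f : ℝ → ℝ, Function.Periodic f L →
      (∫ t in (0:ℝ)..L, f (t + L / k)) = ∫ t in (0:ℝ)..L, f t := by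
    intro f hp
    rw [intervalIntegral.integral_comp_add_right f (L / k)]
    have h := hp.intervalIntegral_add_eq (L / k) 0
    rw [show (0:ℝ) + L / k = L / k by ring, show L + L / k = L / k + L by ring, h, zero_add]
  -- the two quadratic invariants
  set u : ℝ → ℝ := fun t => (deriv γ t).1 with hu
  set v : ℝ → ℝ := fun t => (deriv γ t).2 with hv
  have huc : Continuous u := hdc.fst
  have hvc : Continuous v := hdc.snd
  set P : ℝ := ∫ t in (0:ℝ)..L, (u t ^ 2 - v t ^ 2) with hP
  set Q : ℝ := ∫ t in (0:ℝ)..L, 2 * u t * v t with hQ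
  have hf1c : Continuous fun t => u t ^ 2 - v t ^ 2 := by fun_prop
  have hf2c : Continuous fun t => 2 * u t * v t := by fun_prop
  have hf1per : Function.Periodic (fun t => u t ^ 2 - v t ^ 2) L := by
    intro t; simp only [hu, hv, hdper t]
  have hf2per : Function.Periodic (fun t => 2 * u t * v t) L := by
    intro t; simp only [hu, hv, hdper t]
  have hu' : ∀ t, u (t + L / k) = Real.cos α * u t - Real.sin α * v t := by
    intro t; simp only [hu, hv, hrot t]; rfl
  have hv' : ∀ t, v (t + L / k) = Real.sin α * u t + Real.cos α * v t := by
    intro t; simp only [hu, hv, hrot t]; rfl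
  have hPeq : P = C * P - S * Q := by
    calc P = ∫ t in (0:ℝ)..L, ((fun t => u t ^ 2 - v t ^ 2) (t + L / k)) :=
      (hshift _ hf1per).symm
    _ = ∫ t in (0:ℝ)..L, (C * (u t ^ 2 - v t ^ 2) - S * (2 * u t * v t)) := by
      refine intervalIntegral.integral_congr fun t _ => ?_
      simp only [hu' t, hv' t, hCdef, hSdef]; ring
    _ = C * P - S * Q := by
      rw [intervalIntegral.integral_sub ((show Continuous fun t => C * (u t ^ 2 - v t ^ 2) from continuous_const.mul hf1c).intervalIntegrable _ _)
        ((show Continuous fun t => S * (2 * u t * v t) from continuous_const.mul hf2c).intervalIntegrable _ _),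
        intervalIntegral.integral_const_mul, intervalIntegral.integral_const_mul]
  have hQeq : Q = S * P + C * Q := by
    calc Q = ∫ t in (0:ℝ)..L, ((fun t => 2 * u t * v t) (t + L / k)) :=
      (hshift _ hf2per).symm
    _ = ∫ t in (0:ℝ)..L, (S * (u t ^ 2 - v t ^ 2) + C * (2 * u t * v t)) := by
      refine intervalIntegral.integral_congr fun t _ => ?_
      simp only [hu' t, hv' t, hCdef, hSdef]; ring
    _ = S * P + C * Q := by
      rw [intervalIntegral.integral_add ((show Continuous fun t => S * (u t ^ 2 - v t ^ 2) from continuous_const.mul hf1c).intervalIntegrable _ _)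
        ((show Continuous fun t => C * (2 * u t * v t) from continuous_const.mul hf2c).intervalIntegrable _ _),
        intervalIntegral.integral_const_mul, intervalIntegral.integral_const_mul]
  have hPzero : P = 0 := by
    have h2 : (2 - 2 * C) * P = 0 := by
      linear_combination (1 - C) * hPeq - S * hQeq - P * hCS
    have hne : (2 - 2 * C) ≠ 0 := by nlinarith
    exact (mul_eq_zero.mp h2).resolve_left hne
  have hQzero : Q = 0 := by
    have h2 : (1 - C) * Q = 0 := by
      rw [hPzero] at hQeq; linarith [hQeq]
    have hne : (1 - C) ≠ 0 := by nlinarith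
    exact (mul_eq_zero.mp h2).resolve_left hne
  -- the moments
  set Iu : ℝ := ∫ t in (0:ℝ)..L, u t ^ 2 with hIu
  set Iv : ℝ := ∫ t in (0:ℝ)..L, v t ^ 2 with hIv
  have huic : Continuous fun t => u t ^ 2 := by fun_prop
  have hvic : Continuous fun t => v t ^ 2 := by fun_prop
  have hsub : Iu - Iv = P := by
    rw [hIu, hIv, hP, ← intervalIntegral.integral_sub (huic.intervalIntegrable _ _)
      (hvic.intervalIntegrable _ _)]
  have hadd : Iu + Iv = L := by
    rw [hIu, hIv, ← intervalIntegral.integral_add (huic.intervalIntegrable _ _)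
      (hvic.intervalIntegrable _ _)]
    have h1 : (∫ t in (0:ℝ)..L, (u t ^ 2 + v t ^ 2)) = ∫ t in (0:ℝ)..L, (1:ℝ) :=
      intervalIntegral.integral_congr fun t _ => hunit t
    rw [h1]; simp
  have hsub0 : Iu - Iv = 0 := by rw [hsub, hPzero]
  have hIu2 : Iu = L / 2 := by linarith
  have hIv2 : Iv = L / 2 := by linarith
  -- conversion Icc ↔ interval integral
  have hIcc : ∀ f : ℝ → ℝ, (∫ t in Set.Icc (0:ℝ) L, f t) = ∫ t in (0:ℝ)..L, f t := by
    intro f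
    rw [intervalIntegral.integral_of_le hL.le, MeasureTheory.integral_Icc_eq_integral_Ioc]
  -- Part 1
  have part1 : ∀ θ : ℝ × ℝ, θ.1 ^ 2 + θ.2 ^ 2 = 1 →
      (∫ t in Set.Icc (0 : ℝ) L, dot θ (deriv γ t) ^ 2) = L / 2 := by
    intro θ hθ
    rw [hIcc]
    have hexp : (∫ t in (0:ℝ)..L, dot θ (deriv γ t) ^ 2)
        = ∫ t in (0:ℝ)..L, (θ.1 ^ 2 * u t ^ 2 + (θ.2 ^ 2 * v t ^ 2
            + (θ.1 * θ.2) * (2 * u t * v t))) := by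
      refine intervalIntegral.integral_congr fun t _ => ?_
      simp only [dot, hu, hv]; ring
    rw [hexp, intervalIntegral.integral_add ((show Continuous fun t => θ.1 ^ 2 * u t ^ 2 from continuous_const.mul huic).intervalIntegrable _ _)
      ((show Continuous fun t => θ.2 ^ 2 * v t ^ 2 + θ.1 * θ.2 * (2 * u t * v t) from (continuous_const.mul hvic).add (continuous_const.mul hf2c)).intervalIntegrable _ _),
      intervalIntegral.integral_add ((show Continuous fun t => θ.2 ^ 2 * v t ^ 2 from continuous_const.mul hvic).intervalIntegrable _ _)
      ((show Continuous fun t => θ.1 * θ.2 * (2 * u t * v t) from continuous_const.mul hf2c).intervalIntegrable _ _),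
      intervalIntegral.integral_const_mul, intervalIntegral.integral_const_mul,
      intervalIntegral.integral_const_mul]
    rw [← hIu, ← hIv, ← hQ, hIu2, hIv2, hQzero]
    linear_combination (L / 2) * hθ
  refine ⟨part1, ?_⟩
  -- Part 2 : staticity
  intro μ hμ
  obtain ⟨hμp, hμae⟩ := hμ
  haveI := hμp
  set s : Set (ℝ × ℝ) := {θ : ℝ × ℝ | θ.1 ^ 2 + θ.2 ^ 2 = 1} with hs
  set ν : Measure ℝ := volume.restrict (Set.Icc (0:ℝ) L) with hν
  haveI : IsFiniteMeasure ν := by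
    constructor
    rw [hν, Measure.restrict_apply_univ]
    simp [Real.volume_Icc]
  have hμsc : μ sᶜ = 0 := MeasureTheory.ae_iff.mp hμae
  have hdot1 : ∀ θ : ℝ × ℝ, θ ∈ s → ∀ t, |dot θ (deriv γ t) ^ 2| ≤ 1 := by
    intro θ hθ t
    have h1 := hunit t
    have h2 : θ.1 ^ 2 + θ.2 ^ 2 = 1 := hθ
    rw [abs_le]
    constructor
    · simp only [dot]; nlinarith [sq_nonneg (θ.1 * (deriv γ t).1 + θ.2 * (deriv γ t).2)]
    · simp only [dot]; nlinarith [sq_nonneg (θ.1 * (deriv γ t).2 - θ.2 * (deriv γ t).1)]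
  have hswap : ∀ F : ℝ → (ℝ × ℝ) → ℝ, Continuous (Function.uncurry F) →
      (∀ t θ, θ ∈ s → |F t θ| ≤ 1) →
      (∫ t in Set.Icc (0:ℝ) L, ∫ θ, F t θ ∂μ) = ∫ θ, (∫ t in Set.Icc (0:ℝ) L, F t θ) ∂μ := by
    intro F hFc hFb
    have hae1 : ∀ᵐ p ∂(ν.prod μ), p.2 ∈ s := by
      rw [MeasureTheory.ae_iff]
      have he : {p : ℝ × (ℝ × ℝ) | ¬ p.2 ∈ s} = Set.univ ×ˢ sᶜ := by
        ext p; simp [Set.mem_prod]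
      rw [he, MeasureTheory.Measure.prod_prod, hμsc, mul_zero]
    have hint : MeasureTheory.Integrable (Function.uncurry F) (ν.prod μ) := by
      refine ⟨hFc.aestronglyMeasurable, ?_⟩
      apply MeasureTheory.HasFiniteIntegral.of_bounded (C := (1:ℝ))
      exact hae1.mono fun p hp => by
        simpa [Function.uncurry, Real.norm_eq_abs] using hFb p.1 p.2 hp
    exact MeasureTheory.integral_integral_swap hint
  have hφae : ∀ᵐ θ ∂μ, (∫ t in Set.Icc (0:ℝ) L, dot θ (deriv γ t) ^ 2) = L / 2 :=
    hμae.mono fun θ hθ => part1 θ hθ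
  have hdotpc : Continuous (fun p : ℝ × (ℝ × ℝ) => dot p.2 (deriv γ p.1)) := by
    simp only [dot]
    exact (continuous_snd.fst.mul ((hdc.comp continuous_fst).fst)).add
      (continuous_snd.snd.mul ((hdc.comp continuous_fst).snd))
  have hg : ∀ t1 : ℝ,
      (∫ t2 in Set.Icc (0:ℝ) L, ∫ θ, dot θ (deriv γ t1) ^ 2 * dot θ (deriv γ t2) ^ 2 ∂μ)
      = (L / 2) * ∫ θ, dot θ (deriv γ t1) ^ 2 ∂μ := by
    intro t1
    have hc1 : Continuous (Function.uncurry
        (fun (t : ℝ) (θ : ℝ × ℝ) => dot θ (deriv γ t1) ^ 2 * dot θ (deriv γ t) ^ 2)) := by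
      have hc0 : Continuous (fun p : ℝ × (ℝ × ℝ) => dot p.2 (deriv γ t1)) := by
        simp only [dot]
        exact (continuous_snd.fst.mul continuous_const).add
          (continuous_snd.snd.mul continuous_const)
      exact (hc0.pow 2).mul (hdotpc.pow 2)
    have hb1 : ∀ t θ, θ ∈ s →
        |dot θ (deriv γ t1) ^ 2 * dot θ (deriv γ t) ^ 2| ≤ 1 := by
      intro t θ hθ
      rw [abs_mul]
      calc |dot θ (deriv γ t1) ^ 2| * |dot θ (deriv γ t) ^ 2|
          ≤ 1 * 1 := mul_le_mul (hdot1 θ hθ t1) (hdot1 θ hθ t) (abs_nonneg _) zero_le_one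
      _ = 1 := by ring
    rw [hswap _ hc1 hb1]
    calc (∫ θ, (∫ t2 in Set.Icc (0:ℝ) L,
          dot θ (deriv γ t1) ^ 2 * dot θ (deriv γ t2) ^ 2) ∂μ)
        = ∫ θ, dot θ (deriv γ t1) ^ 2 * (L / 2) ∂μ := by
          refine MeasureTheory.integral_congr_ae (hφae.mono fun θ hθ => ?_)
          show (∫ t2 in Set.Icc (0:ℝ) L, dot θ (deriv γ t1) ^ 2 * dot θ (deriv γ t2) ^ 2)
              = dot θ (deriv γ t1) ^ 2 * (L / 2)
          rw [MeasureTheory.integral_const_mul, hθ]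
    _ = ∫ θ, (L / 2) * dot θ (deriv γ t1) ^ 2 ∂μ := by
          congr 1; funext θ; ring
    _ = (L / 2) * ∫ θ, dot θ (deriv γ t1) ^ 2 ∂μ := MeasureTheory.integral_const_mul _ _
  have hB : Bmeas γ L μ = L ^ 2 / 4 := by
    rw [Bmeas]
    have h1 : (∫ t1 in Set.Icc (0:ℝ) L, ∫ t2 in Set.Icc (0:ℝ) L,
          ∫ θ, dot θ (deriv γ t1) ^ 2 * dot θ (deriv γ t2) ^ 2 ∂μ)
        = ∫ t1 in Set.Icc (0:ℝ) L, (L / 2) * ∫ θ, dot θ (deriv γ t1) ^ 2 ∂μ :=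
      MeasureTheory.integral_congr_ae (Filter.Eventually.of_forall fun t1 => hg t1)
    rw [h1, MeasureTheory.integral_const_mul]
    have hb2 : ∀ t θ, θ ∈ s → |dot θ (deriv γ t) ^ 2| ≤ 1 := fun t θ hθ => hdot1 θ hθ t
    have h2c : Continuous (Function.uncurry (fun (t : ℝ) (θ : ℝ × ℝ) => dot θ (deriv γ t) ^ 2)) := by
      exact hdotpc.pow 2
    rw [hswap _ h2c hb2]
    have h2 : (∫ θ, (∫ t in Set.Icc (0:ℝ) L, dot θ (deriv γ t) ^ 2) ∂μ) = L / 2 := by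
      rw [MeasureTheory.integral_congr_ae hφae]
      simp
    rw [h2]; ring
  rw [hB]; ring


end
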